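/- If 0 < a < 1, a ≠ 1/√3, and s ≥ 0 satisfies a^s + 2((1-a²)/2)^s = 1, then s < log 4 / log 3. Hence the dimension function attains its maximum value log₃4 only at a = 1/√3. -/

import Mathlib

open Real Set

private lemma l2pos : (0:ℝ) < Real.log 2 := Real.log_pos (by norm_num)
private lemma l3pos : (0:ℝ) < Real.log 3 := Real.log_pos (by norm_num)
private lemma l23 : Real.log 2 < Real.log 3 := Real.log_lt_log (by norm_num) (by norm_num)
private lemma sl3 : (Real.log 4 / Real.log 3) * Real.log 3 = 2 * Real.log 2 := by
  rw [div_mul_cancel₀ _ (ne_of_gt l3pos), show (4:ℝ) = 2^2 by norm_num, Real.log_pow]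
  push_cast; ring

private lemma exp_cvx {c x : ℝ} (hc : c ≠ 0) (hx0 : 0 < x) (hx1 : x < 1) :
    Real.exp (x * c) < x * Real.exp c + (1 - x) := by
  have h := strictConvexOn_exp.2 (Set.mem_univ c) (Set.mem_univ 0) hc hx0
    (by linarith : (0:ℝ) < 1 - x) (by ring)
  simpa [smul_eq_mul] using h

private lemma exp_cvx' {c x : ℝ} (hc : c ≠ 0) (hx : 1 < x) :
    Real.exp c < (1/x) * Real.exp (x * c) + (1 - 1/x) := by
  have hx0 : (0:ℝ) < x := by linarith
  have h := strictConvexOn_exp.2 (Set.mem_univ (x*c)) (Set.mem_univ 0)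
    (mul_ne_zero (ne_of_gt hx0) hc) (by positivity : (0:ℝ) < 1/x)
    (by rw [sub_pos, div_lt_one hx0]; exact hx) (by field_simp; ring)
  simpa [smul_eq_mul, inv_mul_cancel_left₀ (ne_of_gt hx0)] using h

private lemma H_neg {x : ℝ} (hx0 : 0 < x) (hx1 : x < 1) :
    Real.exp (x * Real.log 3) + 1 < 2 * Real.exp (x * Real.log 2) := by
  have hc1 : Real.log 3 - Real.log 2 ≠ 0 := by linarith [l23]
  have hc2 : -Real.log 2 ≠ 0 := by linarith [l2pos]
  have h1 := exp_cvx hc1 hx0 hx1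
  have h2 := exp_cvx hc2 hx0 hx1
  rw [Real.exp_sub, Real.exp_log (by norm_num : (0:ℝ) < 3),
    Real.exp_log (by norm_num : (0:ℝ) < 2)] at h1
  rw [Real.exp_neg, Real.exp_log (by norm_num : (0:ℝ) < 2)] at h2
  have hf : Real.exp (x*(Real.log 3 - Real.log 2)) + Real.exp (x*(-Real.log 2)) < 2 := by
    linarith
  have hE : Real.exp (x*Real.log 2) * Real.exp (x*(Real.log 3 - Real.log 2))
      = Real.exp (x*Real.log 3) := by
    rw [← Real.exp_add, show x*Real.log 2 + x*(Real.log 3 - Real.log 2) = x * Real.log 3 by ring]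
  have hE2 : Real.exp (x*Real.log 2) * Real.exp (x*(-Real.log 2)) = 1 := by
    rw [← Real.exp_add, show x*Real.log 2 + x*(-Real.log 2) = 0 by ring, Real.exp_zero]
  have := mul_lt_mul_of_pos_left hf (Real.exp_pos (x*Real.log 2))
  rw [mul_add, hE, hE2] at this
  linarith

private lemma H_pos {x : ℝ} (hx : 1 < x) :
    2 * Real.exp (x * Real.log 2) < Real.exp (x * Real.log 3) + 1 := by
  have hx0 : (0:ℝ) < x := by linarith
  have hc1 : Real.log 3 - Real.log 2 ≠ 0 := by linarith [l23]
  have hc2 : -Real.log 2 ≠ 0 := by linarith [l2pos]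
  have h1 := exp_cvx' hc1 hx
  have h2 := exp_cvx' hc2 hx
  rw [Real.exp_sub, Real.exp_log (by norm_num : (0:ℝ) < 3),
    Real.exp_log (by norm_num : (0:ℝ) < 2)] at h1
  rw [Real.exp_neg, Real.exp_log (by norm_num : (0:ℝ) < 2)] at h2
  have hf : 2 < Real.exp (x*(Real.log 3 - Real.log 2)) + Real.exp (x*(-Real.log 2)) := by
    have hxne : x ≠ 0 := ne_of_gt hx0
    have h1' : (3/2 : ℝ) - (1 - 1/x) < (1/x) * Real.exp (x*(Real.log 3 - Real.log 2)) := by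
      linarith
    have h2' : (1/2 : ℝ) - (1 - 1/x) < (1/x) * Real.exp (x*(-Real.log 2)) := by linarith
    have := add_lt_add h1' h2'
    have hxinv : 0 < 1/x := by positivity
    nlinarith [this]
  have hE : Real.exp (x*Real.log 2) * Real.exp (x*(Real.log 3 - Real.log 2))
      = Real.exp (x*Real.log 3) := by
    rw [← Real.exp_add, show x*Real.log 2 + x*(Real.log 3 - Real.log 2) = x * Real.log 3 by ring]
  have hE2 : Real.exp (x*Real.log 2) * Real.exp (x*(-Real.log 2)) = 1 := by
    rw [← Real.exp_add, show x*Real.log 2 + x*(-Real.log 2) = 0 by ring, Real.exp_zero]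
  have := mul_lt_mul_of_pos_left hf (Real.exp_pos (x*Real.log 2))
  rw [mul_add, hE, hE2] at this
  linarith

private noncomputable def Gfun (x : ℝ) : ℝ :=
  (Real.log 4 / Real.log 3 - 1) * Real.log 2 + Real.log (1 - Real.exp (-(x * Real.log 2)))
    - (Real.log 4 / Real.log 3) * Real.log (1 - Real.exp (-(x * Real.log 3)))

private lemma exp_neg_lt_one {L x : ℝ} (hL : 0 < L) (hx : 0 < x) :
    Real.exp (-(x * L)) < 1 := by
  have : -(x*L) < 0 := by nlinarith
  simpa using Real.exp_lt_exp.mpr this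

private lemma logpiece {L x : ℝ} (hL : 0 < L) (hx : 0 < x) :
    HasDerivAt (fun y => Real.log (1 - Real.exp (-(y * L))))
      (L * Real.exp (-(x*L)) / (1 - Real.exp (-(x*L)))) x := by
  have h0 := exp_neg_lt_one hL hx
  have hne : 1 - Real.exp (-(x*L)) ≠ 0 := by linarith
  have h1 : HasDerivAt (fun y:ℝ => -(y * L)) (-L) x := by
    have := ((hasDerivAt_id x).mul_const L).neg
    rw [one_mul] at this
    exact this
  have h4 := ((h1.exp).const_sub 1).log hne
  convert h4 using 1
  field_simp

private lemma Gderiv {x : ℝ} (hx : 0 < x) :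
    HasDerivAt Gfun
      (Real.log 2 * Real.exp (-(x*Real.log 2)) / (1 - Real.exp (-(x*Real.log 2)))
        - 2 * Real.log 2 * Real.exp (-(x*Real.log 3)) / (1 - Real.exp (-(x*Real.log 3)))) x := by
  have h2 := logpiece l2pos hx
  have h3 := (logpiece l3pos hx).const_mul (Real.log 4 / Real.log 3)
  have h := (h2.const_add ((Real.log 4 / Real.log 3 - 1) * Real.log 2)).sub h3
  unfold Gfun
  refine h.congr_deriv ?_
  have : Real.log 4 / Real.log 3 * (Real.log 3 * Real.exp (-(x*Real.log 3)) / (1 - Real.exp (-(x*Real.log 3))))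
      = (Real.log 4 / Real.log 3 * Real.log 3) * Real.exp (-(x*Real.log 3)) / (1 - Real.exp (-(x*Real.log 3))) := by
    ring
  rw [this, sl3]

private lemma Gderiv_neg {x : ℝ} (hx0 : 0 < x) (hx1 : x < 1) : deriv Gfun x < 0 := by
  rw [(Gderiv hx0).deriv]
  have he2 := exp_neg_lt_one l2pos hx0
  have he3 := exp_neg_lt_one l3pos hx0
  have hp2 : (0:ℝ) < 1 - Real.exp (-(x*Real.log 2)) := by linarith
  have hp3 : (0:ℝ) < 1 - Real.exp (-(x*Real.log 3)) := by linarith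
  rw [sub_neg, div_lt_div_iff₀ hp2 hp3]
  set e2 := Real.exp (-(x*Real.log 2)) with he2d
  set e3 := Real.exp (-(x*Real.log 3)) with he3d
  have h22 : e2 * Real.exp (x*Real.log 2) = 1 := by
    rw [he2d, ← Real.exp_add, show -(x*Real.log 2) + x*Real.log 2 = 0 by ring, Real.exp_zero]
  have h33 : e3 * Real.exp (x*Real.log 3) = 1 := by
    rw [he3d, ← Real.exp_add, show -(x*Real.log 3) + x*Real.log 3 = 0 by ring, Real.exp_zero]
  have hH := H_neg hx0 hx1
  have he2p : 0 < e2 := Real.exp_pos _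
  have he3p : 0 < e3 := Real.exp_pos _
  -- e2*(1-e3) < 2*e3*(1-e2), multiplied by log 2
  have key : e2 + e2*e3 - 2*e3 < 0 := by
    have h := mul_lt_mul_of_pos_left hH (mul_pos he2p he3p)
    nlinarith [h, h22, h33]
  nlinarith [mul_neg_of_pos_of_neg l2pos key]

private lemma Gderiv_pos {x : ℝ} (hx : 1 < x) : 0 < deriv Gfun x := by
  have hx0 : (0:ℝ) < x := by linarith
  rw [(Gderiv hx0).deriv]
  have he2 := exp_neg_lt_one l2pos hx0
  have he3 := exp_neg_lt_one l3pos hx0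
  have hp2 : (0:ℝ) < 1 - Real.exp (-(x*Real.log 2)) := by linarith
  have hp3 : (0:ℝ) < 1 - Real.exp (-(x*Real.log 3)) := by linarith
  rw [sub_pos, div_lt_div_iff₀ hp3 hp2]
  set e2 := Real.exp (-(x*Real.log 2)) with he2d
  set e3 := Real.exp (-(x*Real.log 3)) with he3d
  have h22 : e2 * Real.exp (x*Real.log 2) = 1 := by
    rw [he2d, ← Real.exp_add, show -(x*Real.log 2) + x*Real.log 2 = 0 by ring, Real.exp_zero]
  have h33 : e3 * Real.exp (x*Real.log 3) = 1 := by
    rw [he3d, ← Real.exp_add, show -(x*Real.log 3) + x*Real.log 3 = 0 by ring, Real.exp_zero]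
  have hH := H_pos hx
  have he2p : 0 < e2 := Real.exp_pos _
  have he3p : 0 < e3 := Real.exp_pos _
  have key : 0 < e2 + e2*e3 - 2*e3 := by
    have h := mul_lt_mul_of_pos_left hH (mul_pos he2p he3p)
    nlinarith [h, h22, h33]
  nlinarith [mul_pos l2pos key]

private lemma G_one : Gfun 1 = 0 := by
  unfold Gfun
  rw [one_mul, one_mul, Real.exp_neg, Real.exp_neg,
    Real.exp_log (by norm_num : (0:ℝ) < 2), Real.exp_log (by norm_num : (0:ℝ) < 3),
    show (1:ℝ) - (2:ℝ)⁻¹ = 2⁻¹ by norm_num, show (1:ℝ) - (3:ℝ)⁻¹ = 2/3 by norm_num,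
    Real.log_inv, Real.log_div (by norm_num) (by norm_num)]
  have := sl3
  ring_nf
  ring_nf at this
  linarith

private lemma G_cont_at {x : ℝ} (hx : 0 < x) : ContinuousAt Gfun x :=
  (Gderiv hx).differentiableAt.continuousAt

private lemma G_pos {x : ℝ} (hx0 : 0 < x) (hxne : x ≠ 1) : 0 < Gfun x := by
  rcases lt_or_gt_of_ne hxne with h | h
  · have hanti : StrictAntiOn Gfun (Set.Ioc 0 1) := by
      apply strictAntiOn_of_deriv_neg (convex_Ioc 0 1)
      · exact fun y hy => (G_cont_at hy.1).continuousWithinAt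
      · intro y hy
        rw [interior_Ioc] at hy
        exact Gderiv_neg hy.1 hy.2
    have := hanti ⟨hx0, h.le⟩ ⟨one_pos, le_refl 1⟩ h
    rw [G_one] at this
    exact this
  · have hmono : StrictMonoOn Gfun (Set.Ici 1) := by
      apply strictMonoOn_of_deriv_pos (convex_Ici 1)
      · exact fun y hy => (G_cont_at (by linarith [mem_Ici.mp hy] : (0:ℝ) < y)).continuousWithinAt
      · intro y hy
        rw [interior_Ici] at hy
        exact Gderiv_pos hy
    have := hmono (Set.mem_Ici.mpr le_rfl) (Set.mem_Ici.mpr h.le) h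
    rw [G_one] at this
    exact this

private lemma key {a : ℝ} (ha0 : 0 < a) (ha1 : a < 1) (hne : a ≠ 1 / Real.sqrt 3) :
    a ^ (Real.log 4 / Real.log 3) + 2 * ((1 - a ^ 2) / 2) ^ (Real.log 4 / Real.log 3) < 1 := by
  have hl3 : Real.log 3 ≠ 0 := ne_of_gt l3pos
  have hla : Real.log a < 0 := Real.log_neg ha0 ha1
  set S := Real.log 4 / Real.log 3 with hS
  set x := -(2 * Real.log a / Real.log 3) with hxdef
  have hx0 : 0 < x := by
    have : 2 * Real.log a / Real.log 3 < 0 := div_neg_of_neg_of_pos (by linarith) l3pos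
    rw [hxdef]; linarith
  have hal : Real.log a = -(x * Real.log 3) / 2 := by
    rw [hxdef]; field_simp
  have hxne : x ≠ 1 := by
    intro h
    apply hne
    have hla2 : Real.log a = -(Real.log 3) / 2 := by rw [hal, h]; ring
    have ha' : a = Real.exp (-(Real.log 3) / 2) := by
      rw [← hla2, Real.exp_log ha0]
    have h3 : Real.exp (-(Real.log 3)/2) = 1 / Real.sqrt 3 := by
      rw [show -(Real.log 3)/2 = -(Real.log (Real.sqrt 3)) by
            rw [Real.log_sqrt (by norm_num : (0:ℝ) ≤ 3)]; ring,
        Real.exp_neg, Real.exp_log (Real.sqrt_pos.mpr (by norm_num)), one_div]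
    rw [ha', h3]
  -- basic facts
  have ha2lt : a ^ 2 < 1 := by nlinarith
  have ha2pos : 0 < 1 - a ^ 2 := by linarith
  have ha2 : Real.exp (-(x * Real.log 3)) = a ^ 2 := by
    rw [show -(x * Real.log 3) = Real.log a + Real.log a by rw [hal]; ring,
      Real.exp_add, Real.exp_log ha0, pow_two]
  have haS : Real.exp (-(x * Real.log 2)) = a ^ S := by
    rw [Real.rpow_def_of_pos ha0]
    congr 1
    rw [hal, hS, show (4:ℝ) = 2^2 by norm_num, Real.log_pow]
    push_cast
    field_simp
  have hG := G_pos hx0 hxne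
  unfold Gfun at hG
  rw [ha2, haS] at hG
  -- hG : 0 < (S - 1) * log 2 + log (1 - a ^ S) - S * log (1 - a ^ 2)
  have haS1 : a ^ S < 1 := Real.rpow_lt_one ha0.le ha1 (by positivity)
  have haSpos : 0 < a ^ S := Real.rpow_pos_of_pos ha0 _
  have hbS : ((1 - a ^ 2) / 2) ^ S = Real.exp ((Real.log (1 - a^2) - Real.log 2) * S) := by
    rw [Real.rpow_def_of_pos (by linarith : (0:ℝ) < (1 - a^2)/2),
      Real.log_div (by linarith) (by norm_num)]
  have hstep : Real.log 2 + (Real.log (1 - a^2) - Real.log 2) * S < Real.log (1 - a ^ S) := by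
    nlinarith [hG]
  have hexp := Real.exp_lt_exp.mpr hstep
  rw [Real.exp_add, Real.exp_log (by norm_num : (0:ℝ) < 2),
    Real.exp_log (by linarith : (0:ℝ) < 1 - a ^ S)] at hexp
  rw [hbS]
  linarith

theorem stmt_4 (a s : ℝ) (ha0 : 0 < a) (ha1 : a < 1) (hne : a ≠ 1 / Real.sqrt 3)
    (hs : 0 ≤ s) (heq : a ^ s + 2 * ((1 - a ^ 2) / 2) ^ s = 1) :
    s < Real.log 4 / Real.log 3 := by
  by_contra hcon
  push_neg at hcon
  have hb0 : 0 < (1 - a^2)/2 := by nlinarith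
  have hb1 : (1 - a^2)/2 ≤ 1 := by nlinarith
  have h1 : a ^ s ≤ a ^ (Real.log 4 / Real.log 3) :=
    Real.rpow_le_rpow_of_exponent_ge ha0 ha1.le hcon
  have h2 : ((1-a^2)/2) ^ s ≤ ((1-a^2)/2) ^ (Real.log 4 / Real.log 3) :=
    Real.rpow_le_rpow_of_exponent_ge hb0 hb1 hcon
  have hk := key ha0 ha1 hne
  linarith
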